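/- arXiv:1902.04360 — 2 statements merged into one kernel-verified Lean document; each statement's English description precedes it below -/
import Mathlib

section
/- For all natural numbers k ≥ 1 and m ≥ 0, the central difference operator applied to monomials satisfies δ^k x^{m+1} = (x + k/2)·δ^k x^m + k·δ^{k-1}((x - 1/2)^m), where the expressions are evaluated at x. -/
noncomputable def cdiff (f : ℝ → ℝ) : ℝ → ℝ := fun x => f (x + 1 / 2) - f (x - 1 / 2)

/-! Multiplying by `t` satisfies a Leibniz rule for `δ`:
`δ (t f) x = (x + 1/2) δ f x + f (x - 1/2)`. Iterating it by induction on `k`, the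
two shifts `x ± 1/2` of the inductive hypothesis recombine through
`δ^k f x - δ^k f (x - 1) = δ^{k+1} f (x - 1/2)`, which gives
`δ^k (t f) x = (x + k/2) δ^k f x + k δ^{k-1} f (x - 1/2)`; take `f = t^m`. -/

theorem cdiff_iterate_succ_apply (k : ℕ) (f : ℝ → ℝ) (x : ℝ) :
    cdiff^[k + 1] f x = cdiff^[k] f (x + 1 / 2) - cdiff^[k] f (x - 1 / 2) :=
  Function.iterate_succ_apply' cdiff k f ▸ rfl

theorem cdiff_iterate_succ_id_mul_apply (k : ℕ) (f : ℝ → ℝ) (x : ℝ) :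
    cdiff^[k + 1] (fun t => t * f t) x
      = (x + (k + 1 : ℝ) / 2) * cdiff^[k + 1] f x + (k + 1 : ℝ) * cdiff^[k] f (x - 1 / 2) := by
  induction k generalizing x with
  | zero => simp only [zero_add, Function.iterate_one, Function.iterate_zero_apply, cdiff]; ring
  | succ k ih =>
    have shift : cdiff^[k + 1] f (x - 1 / 2) = cdiff^[k] f x - cdiff^[k] f (x - 1) := by
      rw [cdiff_iterate_succ_apply, sub_add_cancel, sub_sub, add_halves]
    rw [cdiff_iterate_succ_apply (k + 1) (fun t => t * f t) x, ih, ih, add_sub_cancel_right,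
      sub_sub, add_halves, cdiff_iterate_succ_apply (k + 1) f x, shift]
    push_cast
    ring

theorem central_difference_monomial_general (k m : ℕ) (x : ℝ) :
    cdiff^[k] (fun t => t ^ (m + 1)) x
      = (x + (k : ℝ) / 2) * cdiff^[k] (fun t => t ^ m) x
        + (k : ℝ) * cdiff^[k - 1] (fun t => t ^ m) (x - 1 / 2) := by
  cases k with
  | zero => simp only [Function.iterate_zero, id]; push_cast; ring
  | succ k =>
    simp only [pow_succ', Nat.add_sub_cancel, Nat.cast_succ]
    exact cdiff_iterate_succ_id_mul_apply k (fun t => t ^ m) x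

/-- `δ^k x^{m+1} = (x + k/2)·δ^k x^m + k·δ^{k-1}((x-1/2)^m)`. -/
theorem central_difference_monomial (k m : ℕ) (hk : 1 ≤ k) (x : ℝ) :
    cdiff^[k] (fun t => t ^ (m + 1)) x
      = (x + (k : ℝ) / 2) * cdiff^[k] (fun t => t ^ m) x
        + (k : ℝ) * cdiff^[k - 1] (fun t => t ^ m) (x - 1 / 2) :=
  central_difference_monomial_general k m x
end

section
/- The compositional inverse of the formal power series g(t) = (1+λt)^{1/(2λ)} - (1+λt)^{-1/(2λ)} is g^{-1}(t) = log_λ((t/2 + √(1+t²/4))²), where log_λ(u) = (u^λ - 1)/λ. -/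
/-! Since `1 + λ log_λ u = u ^ λ`, the composite collapses to `g (log_λ (s²)) = s - s⁻¹`
for `s = t/2 + √(1 + t²/4)`, and this `s` is the positive root of `s² - t s - 1 = 0`,
i.e. `s - s⁻¹ = t`. -/

open Real

lemma rpow_rpow_one_div_two_mul {u : ℝ} (hu : 0 ≤ u) {lam : ℝ} (hlam : lam ≠ 0) :
    (u ^ lam) ^ (1 / (2 * lam)) = √u := by
  rw [← rpow_mul hu, sqrt_eq_rpow]
  congr 1
  field_simp

lemma half_add_sqrt_one_add_sq_div_four_pos (t : ℝ) : 0 < t / 2 + √(1 + t ^ 2 / 4) := by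
  have hsq : √(1 + t ^ 2 / 4) ^ 2 = 1 + t ^ 2 / 4 := sq_sqrt (by positivity)
  nlinarith [sqrt_nonneg (1 + t ^ 2 / 4), sq_nonneg t]

lemma half_add_sqrt_one_add_sq_div_four_sub_inv (t : ℝ) :
    (t / 2 + √(1 + t ^ 2 / 4)) - (t / 2 + √(1 + t ^ 2 / 4))⁻¹ = t := by
  have hsq : √(1 + t ^ 2 / 4) ^ 2 = 1 + t ^ 2 / 4 := sq_sqrt (by positivity)
  generalize √(1 + t ^ 2 / 4) = r at hsq ⊢
  have hinv : (t / 2 + r)⁻¹ = r - t / 2 :=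
    inv_eq_of_mul_eq_one_right (by linear_combination hsq)
  rw [hinv]
  ring

theorem degenerate_inverse (lam : ℝ) (hlam : lam ≠ 0) :
    ∀ᶠ t in nhds (0 : ℝ),
      (1 + lam * (((t / 2 + Real.sqrt (1 + t ^ 2 / 4)) ^ 2) ^ lam - 1) / lam)
            ^ (1 / (2 * lam))
        - (1 + lam * (((t / 2 + Real.sqrt (1 + t ^ 2 / 4)) ^ 2) ^ lam - 1) / lam)
            ^ (-(1 / (2 * lam)))
      = t := by
  refine Filter.Eventually.of_forall fun t => ?_
  set s := t / 2 + √(1 + t ^ 2 / 4)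
  have hs : 0 < s := half_add_sqrt_one_add_sq_div_four_pos t
  have hbase : 1 + lam * ((s ^ 2) ^ lam - 1) / lam = (s ^ 2) ^ lam := by
    field_simp
    ring
  have hroot : ((s ^ 2) ^ lam) ^ (1 / (2 * lam)) = s := by
    rw [rpow_rpow_one_div_two_mul (sq_nonneg s) hlam, sqrt_sq hs.le]
  rw [hbase, rpow_neg (rpow_nonneg (sq_nonneg s) _), hroot]
  exact half_add_sqrt_one_add_sq_div_four_sub_inv t
end
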